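/- Let L be an 8-dimensional Lie algebra over a field with basis x₁, ..., x₈ and nonzero brackets [x₁,x₂] = x₆, [x₁,x₄] = x₈, [x₃,x₅] = x₈, [x₂,x₇] = x₈, [x₄,x₇] = x₈. Then L is isomorphic to the direct sum H(1) ⊕ H(2). -/

import Mathlib

/-- The Lie algebra `H(1) ⊕ H(2)`: carrier `((Fin 2 → K) × K) × ((Fin 4 → K) × K)`,
each factor a Heisenberg Lie algebra with the second coordinate its centre. -/
abbrev H1H2 (K : Type*) : Type _ := ((Fin 2 → K) × K) × ((Fin 4 → K) × K)

namespace H1H2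

variable {K : Type*} [Field K]

def w2 (a b : Fin 2 → K) : K := a 0 * b 1 - a 1 * b 0

def w4 (a b : Fin 4 → K) : K := a 0 * b 1 - a 1 * b 0 + (a 2 * b 3 - a 3 * b 2)

/-- The bracket on `H(1) ⊕ H(2)`. -/
def brkt (x y : H1H2 K) : H1H2 K := ((0, w2 x.1.1 y.1.1), (0, w4 x.2.1 y.2.1))

instance : LieRing (H1H2 K) :=
  { (inferInstanceAs (AddCommGroup (H1H2 K)) : AddCommGroup (H1H2 K)) with
    bracket := brkt
    add_lie := fun x y z => by
      show brkt (x + y) z = brkt x z + brkt y z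
      simp only [brkt, w2, w4, Prod.ext_iff, Prod.fst_add, Prod.snd_add, Prod.mk_add_mk,
        Pi.add_apply, add_zero]
      exact ⟨⟨by simp, by ring⟩, ⟨by simp, by ring⟩⟩
    lie_add := fun x y z => by
      show brkt x (y + z) = brkt x y + brkt x z
      simp only [brkt, w2, w4, Prod.ext_iff, Prod.fst_add, Prod.snd_add, Prod.mk_add_mk,
        Pi.add_apply, add_zero]
      exact ⟨⟨by simp, by ring⟩, ⟨by simp, by ring⟩⟩
    lie_self := fun x => by
      show brkt x x = 0
      simp only [brkt, w2, w4, Prod.ext_iff, Prod.fst_zero, Prod.snd_zero]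
      exact ⟨⟨by simp, by ring⟩, ⟨by simp, by ring⟩⟩
    leibniz_lie := fun x y z => by
      show brkt x (brkt y z) = brkt (brkt x y) z + brkt y (brkt x z)
      simp only [brkt, w2, w4, Prod.ext_iff, Prod.fst_add, Prod.snd_add, Prod.mk_add_mk,
        Pi.zero_apply, add_zero]
      exact ⟨⟨by simp, by ring⟩, ⟨by simp, by ring⟩⟩ }

instance : LieAlgebra K (H1H2 K) :=
  { (inferInstanceAs (Module K (H1H2 K)) : Module K (H1H2 K)) with
    lie_smul := fun a x y => by
      show brkt x (a • y) = a • brkt x y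
      simp only [brkt, w2, w4, Prod.ext_iff, Prod.smul_fst, Prod.smul_snd, Prod.smul_mk,
        Pi.smul_apply, smul_eq_mul, smul_zero]
      exact ⟨⟨by simp, by ring⟩, ⟨by simp, by ring⟩⟩ }

end H1H2

/-! In the basis `x₁' = x₁ + x₇, x₂' = x₂ − x₄, x₃, x₄, x₅, x₆' = x₆ − x₈, x₇, x₈` the only nonzero
brackets are `[x₁', x₂'] = x₆'`, `[x₃, x₅] = x₈` and `[x₄, x₇] = x₈` (the `x₈`-terms of `[x₁, x₄]`
and `[x₇, x₄]`, resp. of `[x₂, x₇]` and `[−x₄, x₇]`, cancel), so `L` splits as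
`⟨x₁', x₂', x₆'⟩ ⊕ ⟨x₃, x₅, x₄, x₇, x₈⟩ ≅ H(1) ⊕ H(2)`. Since the bracket is bilinear, a linear
isomorphism is a Lie isomorphism as soon as it respects the brackets of basis vectors. -/

theorem LinearMap.map_lie_of_basis {R L L' ι : Type*} [CommRing R] [LieRing L] [LieAlgebra R L]
    [LieRing L'] [LieAlgebra R L'] (b : Module.Basis ι R L) (f : L →ₗ[R] L')
    (h : ∀ i j, f ⁅b i, b j⁆ = ⁅f (b i), f (b j)⁆) (x y : L) : f ⁅x, y⁆ = ⁅f x, f y⁆ :=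
  LinearMap.congr_fun₂ (LinearMap.ext_basis b b
    (B := (LieModule.toEnd R L L : L →ₗ[R] Module.End R L).compr₂ f)
    (B' := (LieModule.toEnd R L' L' : L' →ₗ[R] Module.End R L').compl₁₂ f f) h) x y

namespace H1H2

variable {K : Type*} [Field K]

lemma lie_def (x y : H1H2 K) : ⁅x, y⁆ = brkt x y := rfl

-- Coordinates of `x₁, …, x₈` in the basis `x₁', x₂', x₆'` of `H(1)` and
-- `x₃, x₅, x₄, x₇, x₈` of `H(2)`.
def basisImage : Fin 8 → H1H2 K :=
  ![((![1, 0], 0), (![0, 0, 0, -1], 0)),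
    ((![0, 1], 0), (![0, 0, 1, 0], 0)),
    ((![0, 0], 0), (![1, 0, 0, 0], 0)),
    ((![0, 0], 0), (![0, 0, 1, 0], 0)),
    ((![0, 0], 0), (![0, 1, 0, 0], 0)),
    ((![0, 0], 1), (![0, 0, 0, 0], 1)),
    ((![0, 0], 0), (![0, 0, 0, 1], 0)),
    ((![0, 0], 0), (![0, 0, 0, 0], 1))]

variable {L : Type*} [LieRing L] [LieAlgebra K L] (b : Module.Basis (Fin 8) K L)

noncomputable def ofBasis : L →ₗ[K] H1H2 K := b.constr K basisImage

lemma ofBasis_apply_basis (i : Fin 8) : ofBasis b (b i) = basisImage i :=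
  b.constr_basis K _ i

noncomputable def invOfBasis : H1H2 K →ₗ[K] L where
  toFun x := x.1.1 0 • (b 0 + b 6) + x.1.1 1 • (b 1 - b 3) + x.1.2 • (b 5 - b 7)
    + x.2.1 0 • b 2 + x.2.1 1 • b 4 + x.2.1 2 • b 3 + x.2.1 3 • b 6 + x.2.2 • b 7
  map_add' x y := by
    simp only [Prod.fst_add, Prod.snd_add, Pi.add_apply]
    module
  map_smul' c x := by
    simp only [Prod.smul_fst, Prod.smul_snd, Pi.smul_apply, smul_eq_mul, RingHom.id_apply]
    module

lemma invOfBasis_comp_ofBasis : (invOfBasis b).comp (ofBasis b) = LinearMap.id := by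
  refine b.ext fun i => ?_
  fin_cases i <;> simp [ofBasis_apply_basis, invOfBasis, basisImage]

lemma ofBasis_comp_invOfBasis : (ofBasis b).comp (invOfBasis b) = LinearMap.id := by
  refine LinearMap.ext fun x => ?_
  ext k <;> (try fin_cases k) <;> simp [invOfBasis, ofBasis_apply_basis, basisImage]

noncomputable def linearEquivOfBasis : L ≃ₗ[K] H1H2 K :=
  .ofLinearMap (ofBasis b) (invOfBasis b) (ofBasis_comp_invOfBasis b) (invOfBasis_comp_ofBasis b)

set_option maxHeartbeats 400000 in
variable {b} in
lemma ofBasis_lie_basis (h12 : ⁅b 0, b 1⁆ = b 5) (h14 : ⁅b 0, b 3⁆ = b 7)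
    (h35 : ⁅b 2, b 4⁆ = b 7) (h27 : ⁅b 1, b 6⁆ = b 7) (h47 : ⁅b 3, b 6⁆ = b 7)
    (hzero : ∀ i j : Fin 8,
      (i, j) ∉ ({(0,1),(1,0),(0,3),(3,0),(2,4),(4,2),(1,6),(6,1),(3,6),(6,3)} : Set (Fin 8 × Fin 8)) → ⁅b i, b j⁆ = 0)
    (i j : Fin 8) : ofBasis b ⁅b i, b j⁆ = ⁅ofBasis b (b i), ofBasis b (b j)⁆ := by
  have h21 : ⁅b 1, b 0⁆ = -b 5 := by rw [← lie_skew, h12]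
  have h41 : ⁅b 3, b 0⁆ = -b 7 := by rw [← lie_skew, h14]
  have h53 : ⁅b 4, b 2⁆ = -b 7 := by rw [← lie_skew, h35]
  have h72 : ⁅b 6, b 1⁆ = -b 7 := by rw [← lie_skew, h27]
  have h74 : ⁅b 6, b 3⁆ = -b 7 := by rw [← lie_skew, h47]
  fin_cases i <;> fin_cases j <;>
    simp [h12, h14, h35, h27, h47, h21, h41, h53, h72, h74, hzero, map_neg,
      ofBasis_apply_basis, basisImage, lie_def, brkt, w2, w4, Prod.ext_iff]

end H1H2

/-- the 8-dimensional Lie algebra with nonzero brackets [x₁,x₂]=x₆, [x₁,x₄]=x₈, [x₃,x₅]=x₈, [x₂,x₇]=x₈, [x₄,x₇]=x₈ is isomorphic to H(1) ⊕ H(2). -/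
theorem stmt_4 (K : Type*) [Field K] (L : Type*) [LieRing L] [LieAlgebra K L]
    (b : Module.Basis (Fin 8) K L)
    (h12 : ⁅b 0, b 1⁆ = b 5)
    (h14 : ⁅b 0, b 3⁆ = b 7)
    (h35 : ⁅b 2, b 4⁆ = b 7)
    (h27 : ⁅b 1, b 6⁆ = b 7)
    (h47 : ⁅b 3, b 6⁆ = b 7)
    (hzero : ∀ i j : Fin 8,
      (i, j) ∉ ({(0,1),(1,0),(0,3),(3,0),(2,4),(4,2),(1,6),(6,1),(3,6),(6,3)} : Set (Fin 8 × Fin 8)) → ⁅b i, b j⁆ = 0) :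
    Nonempty (L ≃ₗ⁅K⁆ H1H2 K) := by
  have hlie := (H1H2.ofBasis b).map_lie_of_basis b
    (H1H2.ofBasis_lie_basis h12 h14 h35 h27 h47 hzero)
  exact ⟨{ H1H2.linearEquivOfBasis b with map_lie' := hlie _ _ }⟩
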